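/- arXiv:2511.23190 — 3 statements merged into one kernel-verified Lean document; each statement's English description precedes it below -/
import Mathlib

section
/- For every vertex v = (s_i, s_j, s_k) of the generalized Latin square graph Γ(S) of a finite semigroup S of order n, the degree of v equals 2n − 3 + N_S(s_k) − 2N_R(v) − 2N_C(v). -/
/-!
A vertex `(a, b, ab)` of `Γ(S)` is determined by `(a, b)`, and `(a, b, ab)` is adjacent to
`(i, j, k)` (where `k = ij`) exactly when it shares only the row (`a = i`), only the column
(`b = j`) or only the product (`ab = k`). These three classes have `n - 1 - N_R`, `n - 1 - N_C`
and `N_S - 1 - N_R - N_C` elements: the pairs with product `k` are `(i, j)` itself, the `N_R`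
pairs `(i, t)`, the `N_C` pairs `(t, j)`, and the third class.
-/

open Finset

variable {S : Type*} [Fintype S] [DecidableEq S]

/-- Two triples agree in exactly one coordinate. -/
def agreeOne (v w : S × S × S) : Prop :=
  (v.1 = w.1 ∧ v.2.1 ≠ w.2.1 ∧ v.2.2 ≠ w.2.2) ∨
  (v.1 ≠ w.1 ∧ v.2.1 = w.2.1 ∧ v.2.2 ≠ w.2.2) ∨
  (v.1 ≠ w.1 ∧ v.2.1 ≠ w.2.1 ∧ v.2.2 = w.2.2)

/-- The generalized Latin square graph of a multiplication `mul` on `S`: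
vertices are triples `(a,b,c)` with `mul a b = c`, two distinct vertices being
adjacent iff they agree in exactly one coordinate. -/
def GLSG (mul : S → S → S) :
    SimpleGraph {v : S × S × S // mul v.1 v.2.1 = v.2.2} where
  Adj v w := v ≠ w ∧ agreeOne v.1 w.1
  symm := by
    constructor
    rintro v w ⟨h1, h2⟩
    refine ⟨h1.symm, ?_⟩
    rcases h2 with ⟨a, b, c⟩ | ⟨a, b, c⟩ | ⟨a, b, c⟩
    · exact Or.inl ⟨a.symm, b.symm, c.symm⟩
    · exact Or.inr (Or.inl ⟨a.symm, b.symm, c.symm⟩)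
    · exact Or.inr (Or.inr ⟨a.symm, b.symm, c.symm⟩)
  loopless := by constructor; rintro v ⟨h1, _⟩; exact h1 rfl

instance (v w : S × S × S) : Decidable (agreeOne v w) := by
  unfold agreeOne; infer_instance

instance (mul : S → S → S) : DecidableRel (GLSG mul).Adj := fun v w =>
  inferInstanceAs (Decidable (v ≠ w ∧ agreeOne v.1 w.1))

/-- `N_S(k)`: the number of ordered pairs `(x,y)` with `x*y = k`. -/
def NScount (mul : S → S → S) (k : S) : ℕ :=
  (univ.filter fun p : S × S => mul p.1 p.2 = k).card

/-- `N_R(v)` for `v = (i,j,k)`: the number of `t ≠ j` with `i*t = k`. -/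
def NRcount (mul : S → S → S) (i j k : S) : ℕ :=
  (univ.filter fun t : S => t ≠ j ∧ mul i t = k).card

/-- `N_C(v)` for `v = (i,j,k)`: the number of `t ≠ i` with `t*j = k`. -/
def NCcount (mul : S → S → S) (i j k : S) : ℕ :=
  (univ.filter fun t : S => t ≠ i ∧ mul t j = k).card

section Counting

variable {α β : Type*}

lemma card_filter_or_or [DecidableEq α] {s : Finset α} (P Q R : α → Prop) [DecidablePred P]
    [DecidablePred Q] [DecidablePred R] (hPQ : ∀ x, P x → ¬Q x) (hPR : ∀ x, P x → ¬R x)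
    (hQR : ∀ x, Q x → ¬R x) :
    #{x ∈ s | P x ∨ Q x ∨ R x} = #{x ∈ s | P x} + #{x ∈ s | Q x} + #{x ∈ s | R x} := by
  rw [filter_or, filter_or, card_union_of_disjoint, card_union_of_disjoint, add_assoc]
  · exact disjoint_filter.2 fun x _ => hQR x
  · rw [← filter_or]
    exact disjoint_filter.2 fun x _ h => by have := hPQ x h; have := hPR x h; tauto

lemma card_filter_and_add_card_filter_not_and (s : Finset α) (P Q : α → Prop)
    [DecidablePred P] [DecidablePred Q] :
    #{x ∈ s | P x ∧ Q x} + #{x ∈ s | ¬P x ∧ Q x} = #{x ∈ s | Q x} := by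
  rw [← card_filter_add_card_filter_not (s := {x ∈ s | Q x}) P, filter_filter, filter_filter]
  simp only [and_comm]

variable [Fintype α] [Fintype β]

lemma card_filter_fst_eq_and [DecidableEq α] (a : α) (P : α × β → Prop) [DecidablePred P] :
    #{p : α × β | p.1 = a ∧ P p} = #{b | P (a, b)} :=
  (card_nbij' (Prod.mk a) Prod.snd (fun _ _ => by simp_all)
    (fun ⟨_, _⟩ hp => by obtain ⟨rfl, hp⟩ := (mem_filter.1 hp).2; simpa using hp)
    (fun _ _ => rfl) (fun _ _ => Prod.ext (by simp_all) rfl)).symm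

lemma card_filter_snd_eq_and [DecidableEq β] (b : β) (P : α × β → Prop) [DecidablePred P] :
    #{p : α × β | p.2 = b ∧ P p} = #{a | P (a, b)} :=
  (card_nbij' (·, b) Prod.fst (fun _ _ => by simp_all)
    (fun ⟨_, _⟩ hp => by obtain ⟨rfl, hp⟩ := (mem_filter.1 hp).2; simpa using hp)
    (fun _ _ => rfl) (fun _ _ => Prod.ext rfl (by simp_all))).symm

lemma card_filter_ne_and_not_add_card_filter_ne_and [DecidableEq α] (a : α) (q : α → Prop)
    [DecidablePred q] :
    #{t | t ≠ a ∧ ¬q t} + #{t | t ≠ a ∧ q t} = Fintype.card α - 1 := by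
  rw [← card_univ, ← card_erase_of_mem (mem_univ a), add_comm,
    ← card_filter_add_card_filter_not (s := univ.erase a) q, ← filter_ne', filter_filter,
    filter_filter]

lemma card_filter_eq_card_filter_ne_and_add_one [DecidableEq α] {a : α} {q : α → Prop}
    [DecidablePred q] (ha : q a) : #{t | q t} = #{t | t ≠ a ∧ q t} + 1 := by
  rw [← card_erase_add_one (mem_filter.2 ⟨mem_univ a, ha⟩), ← filter_ne', filter_filter]
  simp only [and_comm]

end Counting

namespace GLSG

variable (mul : S → S → S)

def vertexEquiv : {v : S × S × S // mul v.1 v.2.1 = v.2.2} ≃ S × S where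
  toFun v := (v.1.1, v.1.2.1)
  invFun p := ⟨(p.1, p.2, mul p.1 p.2), rfl⟩
  left_inv := by rintro ⟨⟨a, b, c⟩, h : mul a b = c⟩; subst h; rfl
  right_inv _ := rfl

theorem degree_eq (i j : S) :
    (GLSG mul).degree ⟨(i, j, mul i j), rfl⟩ =
      #{p : S × S | p.1 = i ∧ p.2 ≠ j ∧ mul p.1 p.2 ≠ mul i j} +
      #{p : S × S | p.2 = j ∧ p.1 ≠ i ∧ mul p.1 p.2 ≠ mul i j} +
      #{p : S × S | p.1 ≠ i ∧ p.2 ≠ j ∧ mul p.1 p.2 = mul i j} := by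
  rw [← card_filter_or_or _ _ _ (by tauto) (by tauto) (by tauto),
    ← SimpleGraph.card_neighborFinset_eq_degree, SimpleGraph.neighborFinset_eq_filter]
  refine card_equiv (vertexEquiv mul) fun w => ?_
  obtain ⟨⟨a, b, c⟩, h : mul a b = c⟩ := w
  subst h
  simp only [mem_filter, mem_univ, true_and, GLSG, agreeOne, vertexEquiv, ne_eq, Equiv.coe_fn_mk]
  grind

theorem card_row_add_NRcount (i j k : S) :
    #{p : S × S | p.1 = i ∧ p.2 ≠ j ∧ mul p.1 p.2 ≠ k} + NRcount mul i j k =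
      Fintype.card S - 1 := by
  rw [card_filter_fst_eq_and i (fun p => p.2 ≠ j ∧ mul p.1 p.2 ≠ k)]
  exact card_filter_ne_and_not_add_card_filter_ne_and j (mul i · = k)

theorem card_col_add_NCcount (i j k : S) :
    #{p : S × S | p.2 = j ∧ p.1 ≠ i ∧ mul p.1 p.2 ≠ k} + NCcount mul i j k =
      Fintype.card S - 1 := by
  rw [card_filter_snd_eq_and j (fun p => p.1 ≠ i ∧ mul p.1 p.2 ≠ k)]
  exact card_filter_ne_and_not_add_card_filter_ne_and i (mul · j = k)

theorem card_symbol_add_NRcount_add_NCcount (i j : S) :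
    #{p : S × S | p.1 ≠ i ∧ p.2 ≠ j ∧ mul p.1 p.2 = mul i j} + NRcount mul i j (mul i j) +
      NCcount mul i j (mul i j) + 1 = NScount mul (mul i j) := by
  have hrow : #{p : S × S | p.1 = i ∧ mul p.1 p.2 = mul i j} =
      NRcount mul i j (mul i j) + 1 := by
    rw [card_filter_fst_eq_and i (fun p => mul p.1 p.2 = mul i j)]
    exact card_filter_eq_card_filter_ne_and_add_one (q := (mul i · = mul i j)) rfl
  have hcol : #{p : S × S | p.2 = j ∧ p.1 ≠ i ∧ mul p.1 p.2 = mul i j} =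
      NCcount mul i j (mul i j) :=
    card_filter_snd_eq_and j (fun p => p.1 ≠ i ∧ mul p.1 p.2 = mul i j)
  have hsplit_fst := card_filter_and_add_card_filter_not_and univ (fun p : S × S => p.1 = i)
    (fun p => mul p.1 p.2 = mul i j)
  have hsplit_snd := card_filter_and_add_card_filter_not_and univ (fun p : S × S => p.2 = j)
    (fun p => p.1 ≠ i ∧ mul p.1 p.2 = mul i j)
  have hsymbol : #{p : S × S | p.1 ≠ i ∧ p.2 ≠ j ∧ mul p.1 p.2 = mul i j} =
      #{p : S × S | p.2 ≠ j ∧ p.1 ≠ i ∧ mul p.1 p.2 = mul i j} := by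
    simp only [and_left_comm]
  simp only [← ne_eq] at hsplit_fst hsplit_snd
  rw [hrow] at hsplit_fst
  rw [hcol] at hsplit_snd
  rw [NScount, hsymbol]
  omega

end GLSG

theorem stmt2_general (mul : S → S → S)
    (v : {v : S × S × S // mul v.1 v.2.1 = v.2.2}) :
    ((GLSG mul).degree v : ℤ) =
      2 * Fintype.card S - 3 + NScount mul v.1.2.2
        - 2 * NRcount mul v.1.1 v.1.2.1 v.1.2.2
        - 2 * NCcount mul v.1.1 v.1.2.1 v.1.2.2 := by
  obtain ⟨⟨i, j, k⟩, hk : mul i j = k⟩ := v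
  subst hk
  have hpos := Fintype.card_pos_iff.2 ⟨i⟩
  have hrow := GLSG.card_row_add_NRcount mul i j (mul i j)
  have hcol := GLSG.card_col_add_NCcount mul i j (mul i j)
  have hsymbol := GLSG.card_symbol_add_NRcount_add_NCcount mul i j
  rw [GLSG.degree_eq]
  push_cast
  omega

/-- Degree formula: `deg v = 2n - 3 + N_S(s_k) - 2 N_R(v) - 2 N_C(v)`. -/
theorem stmt2 (mul : S → S → S)
    (hassoc : ∀ a b c : S, mul (mul a b) c = mul a (mul b c))
    (v : {v : S × S × S // mul v.1 v.2.1 = v.2.2}) :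
    ((GLSG mul).degree v : ℤ) =
      2 * Fintype.card S - 3 + NScount mul v.1.2.2
        - 2 * NRcount mul v.1.1 v.1.2.1 v.1.2.2
        - 2 * NCcount mul v.1.1 v.1.2.1 v.1.2.2 :=
  stmt2_general mul v
end

section
/- If G is a finite group of order m ≥ 1 and |I| = n > 1, then the generalized Latin square graph Γ(B₀(G, I)) of the Brandt semigroup is not regular. -/
open Finset

variable {S : Type*} [Fintype S] [DecidableEq S]

/-- Multiplication of the Brandt semigroup `B₀(G, I)`: elements are `some (i,g,j)`
together with a zero `none`. -/
def brandtMul {G : Type*} [Mul G] {I : Type*} [DecidableEq I] :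
    Option (I × G × I) → Option (I × G × I) → Option (I × G × I)
  | some (i, g, j), some (k, h, l) => if j = k then some (i, g * h, l) else none
  | _, _ => none

/-!
Let `0` be a two-sided zero of a multiplication with some product `c * y ≠ 0`. The neighbours
of the vertex `(0, 0, 0)` are the triples `(a, b, 0)` with `a, b ≠ 0`; changing the first
coordinate `c` into `0` embeds them among the neighbours of `(c, 0, 0)`, missing the neighbour
`(c, y, c * y)`. So `(c, 0, 0)` has strictly larger degree. In `B₀(G, I)` take `c = y = (i, 1, i)`.
-/

namespace GLSG

variable {α : Type*} {mul : α → α → α} {z c y : α}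

def mk (mul : α → α → α) (a b : α) : {v : α × α × α // mul v.1 v.2.1 = v.2.2} :=
  ⟨(a, b, mul a b), rfl⟩

def swapFst (mul : α → α → α) [DecidableEq α] (c z : α)
    (u : {v : α × α × α // mul v.1 v.2.1 = v.2.2}) : {v : α × α × α // mul v.1 v.2.1 = v.2.2} :=
  if u.1.1 = c then mk mul z u.1.2.1 else u

theorem swapFst_val [DecidableEq α] (hzl : ∀ x, mul z x = z)
    {u : {v : α × α × α // mul v.1 v.2.1 = v.2.2}} (hu₁ : u.1.1 ≠ z) (hu₃ : u.1.2.2 = z) :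
    (swapFst mul c z u).1 = (Equiv.swap c z u.1.1, u.1.2.1, u.1.2.2) := by
  unfold swapFst
  split_ifs with hc
  · simp [mk, hc, hzl, hu₃]
  · rw [Equiv.swap_apply_of_ne_of_ne hc hu₁]

theorem adj_mk_zero_zero (hzl : ∀ x, mul z x = z) (hzr : ∀ x, mul x z = z)
    {u : {v : α × α × α // mul v.1 v.2.1 = v.2.2}} (hu : (GLSG mul).Adj (mk mul z z) u) :
    u.1.1 ≠ z ∧ u.1.2.1 ≠ z ∧ u.1.2.2 = z := by
  obtain ⟨⟨a, b, w⟩, hab⟩ := u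
  obtain ⟨-, h⟩ := hu
  dsimp only at hab
  subst hab
  simp only [mk, hzl] at h
  rcases h with ⟨rfl, -, h⟩ | ⟨-, rfl, h⟩ | ⟨ha, hb, h⟩
  · exact absurd (hzl b).symm h
  · exact absurd (hzr a).symm h
  · exact ⟨Ne.symm ha, Ne.symm hb, h.symm⟩

theorem adj_mk_zero (hzr : ∀ x, mul x z = z) {u : {v : α × α × α // mul v.1 v.2.1 = v.2.2}}
    (hu₁ : u.1.1 ≠ c) (hu₂ : u.1.2.1 ≠ z) (hu₃ : u.1.2.2 = z) :
    (GLSG mul).Adj (mk mul c z) u := by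
  refine ⟨fun h => hu₁ (congrArg (·.1.1) h).symm, Or.inr (Or.inr ⟨?_, ?_, ?_⟩)⟩
  · exact Ne.symm hu₁
  · exact Ne.symm hu₂
  · simp [mk, hzr, hu₃]

variable [Fintype α] [DecidableEq α]

theorem degree_mk_zero_zero_lt (hzl : ∀ x, mul z x = z) (hzr : ∀ x, mul x z = z)
    (hcy : mul c y ≠ z) : (GLSG mul).degree (mk mul z z) < (GLSG mul).degree (mk mul c z) := by
  have hy : y ≠ z := by rintro rfl; exact hcy (hzr c)
  have hw : mk mul c y ∈ (GLSG mul).neighborFinset (mk mul c z) := by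
    rw [SimpleGraph.mem_neighborFinset]
    refine ⟨fun h => hy (congrArg (·.1.2.1) h).symm, Or.inl ⟨rfl, Ne.symm hy, ?_⟩⟩
    simpa [mk, hzr] using hcy.symm
  have hmaps : Set.MapsTo (swapFst mul c z) ((GLSG mul).neighborFinset (mk mul z z))
      (((GLSG mul).neighborFinset (mk mul c z)).erase (mk mul c y)) := by
    intro u hu
    obtain ⟨hu₁, hu₂, hu₃⟩ := adj_mk_zero_zero hzl hzr ((SimpleGraph.mem_neighborFinset ..).1 hu)
    have hval := swapFst_val (c := c) hzl hu₁ hu₃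
    refine Finset.mem_erase.2 ⟨fun h => hcy ?_, (SimpleGraph.mem_neighborFinset ..).2 ?_⟩
    · simpa [hval, hu₃, mk] using (congrArg (·.1.2.2) h).symm
    · refine adj_mk_zero hzr ?_ (by rwa [hval]) (by rwa [hval])
      rwa [hval, Ne, Equiv.swap_apply_eq_iff, Equiv.swap_apply_left]
  have hinj : Set.InjOn (swapFst mul c z) ((GLSG mul).neighborFinset (mk mul z z)) := by
    intro u hu u' hu' h
    obtain ⟨hu₁, -, hu₃⟩ := adj_mk_zero_zero hzl hzr ((SimpleGraph.mem_neighborFinset ..).1 hu)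
    obtain ⟨hu₁', -, hu₃'⟩ := adj_mk_zero_zero hzl hzr ((SimpleGraph.mem_neighborFinset ..).1 hu')
    have h := congrArg Subtype.val h
    rw [swapFst_val hzl hu₁ hu₃, swapFst_val hzl hu₁' hu₃'] at h
    simp only [Prod.mk.injEq, (Equiv.swap c z).injective.eq_iff] at h
    exact Subtype.ext (Prod.ext h.1 (Prod.ext h.2.1 h.2.2))
  rw [← SimpleGraph.card_neighborFinset_eq_degree, ← SimpleGraph.card_neighborFinset_eq_degree]
  exact (Finset.card_le_card_of_injOn _ hmaps hinj).trans_lt (Finset.card_erase_lt_of_mem hw)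

theorem not_isRegularOfDegree_of_zero (hzl : ∀ x, mul z x = z) (hzr : ∀ x, mul x z = z)
    (hcy : mul c y ≠ z) : ¬ ∃ d, (GLSG mul).IsRegularOfDegree d := by
  rintro ⟨d, hd⟩
  have h := degree_mk_zero_zero_lt hzl hzr hcy
  rw [hd, hd] at h
  exact lt_irrefl d h

end GLSG

theorem brandtMul_none_left {G I : Type*} [Mul G] [DecidableEq I] (x : Option (I × G × I)) :
    brandtMul none x = none :=
  rfl

theorem brandtMul_none_right {G I : Type*} [Mul G] [DecidableEq I] (x : Option (I × G × I)) :
    brandtMul x none = none := by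
  cases x <;> rfl

set_option synthInstance.maxSize 512

/-- If `|I| > 1`, the generalized Latin square graph of the Brandt semigroup
`B₀(G, I)` is not regular. -/
theorem stmt14 (G : Type*) [Group G] [Fintype G] [DecidableEq G]
    (I : Type*) [Fintype I] [DecidableEq I] (hn : 1 < Fintype.card I) :
    ¬ ∃ d, (GLSG (brandtMul (G := G) (I := I))).IsRegularOfDegree d := by
  obtain ⟨i⟩ : Nonempty I := Fintype.card_pos_iff.1 (by omega)
  exact GLSG.not_isRegularOfDegree_of_zero brandtMul_none_left brandtMul_none_right
    (c := some (i, 1, i)) (y := some (i, 1, i)) (by simp [brandtMul])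
end

section
/- Let S be a finite null semigroup of order n with zero 0 (i.e., xy = 0 for all x, y ∈ S). Then the map (s_i, s_j, 0) ↦ (s_i, s_j) is a graph isomorphism from Γ(S) onto the tensor product K_n × K_n of two complete graphs on n vertices. -/
open Finset

variable {S : Type*} [Fintype S] [DecidableEq S]

/-- The tensor (categorical) product of two simple graphs: `(u,v)` is adjacent
to `(u',v')` iff `u ~ u'` and `v ~ v'`. -/
def tensorGraph {α β : Type*} (G : SimpleGraph α) (H : SimpleGraph β) :
    SimpleGraph (α × β) where
  Adj p q := G.Adj p.1 q.1 ∧ H.Adj p.2 q.2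
  symm := ⟨fun _ _ ⟨h1, h2⟩ => ⟨G.adj_symm h1, H.adj_symm h2⟩⟩
  loopless := ⟨fun _ ⟨h1, _⟩ => G.irrefl h1⟩

/-! In a null semigroup every vertex of `Γ(S)` has third coordinate `0`, so a vertex is
determined by its first two coordinates and any two vertices agree in the third one. Hence
two vertices agree in exactly one coordinate iff they differ in both of the others, which is
adjacency in `K_n × K_n`. -/

def glsgVertexEquiv {α : Type*} (mul : α → α → α) :
    {v : α × α × α // mul v.1 v.2.1 = v.2.2} ≃ α × α where
  toFun v := (v.1.1, v.1.2.1)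
  invFun p := ⟨(p.1, p.2, mul p.1 p.2), rfl⟩
  left_inv v := Subtype.ext (Prod.ext rfl (Prod.ext rfl v.2))
  right_inv _ := rfl

theorem agreeOne_iff_of_snd_snd_eq {α : Type*} {v w : α × α × α} (h : v.2.2 = w.2.2) :
    agreeOne v w ↔ v.1 ≠ w.1 ∧ v.2.1 ≠ w.2.1 := by
  simp [agreeOne, h]

theorem glsg_adj_iff_of_forall_mul_eq {α : Type*} {mul : α → α → α} {z : α}
    (h : ∀ x y, mul x y = z) {v w : {v : α × α × α // mul v.1 v.2.1 = v.2.2}} :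
    (GLSG mul).Adj v w ↔ v.1.1 ≠ w.1.1 ∧ v.1.2.1 ≠ w.1.2.1 := by
  have hvw : v.1.2.2 = w.1.2.2 := by rw [← v.2, ← w.2, h, h]
  change v ≠ w ∧ agreeOne v.1 w.1 ↔ _
  rw [agreeOne_iff_of_snd_snd_eq hvw]
  exact and_iff_right_of_imp fun hne hEq => hne.1 (hEq ▸ rfl)

/-- For a null semigroup `S` of order `n` with zero `z`, the map
`(s_i, s_j, 0) ↦ (s_i, s_j)` is a graph isomorphism from `Γ(S)` onto the tensor
product `K_n × K_n` of two complete graphs on `n` vertices. -/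
theorem stmt16 (mul : S → S → S) (z : S) (h : ∀ x y : S, mul x y = z) :
    ∃ φ : GLSG mul ≃g
        tensorGraph (⊤ : SimpleGraph S) (⊤ : SimpleGraph S),
      ∀ v, φ v = (v.1.1, v.1.2.1) :=
  ⟨⟨glsgVertexEquiv mul, (glsg_adj_iff_of_forall_mul_eq h).symm⟩, fun _ => rfl⟩
end
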